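/- arXiv:2404.02842 — 3 statements merged into one kernel-verified Lean document; each statement's English description precedes it below -/
import Mathlib

section
/- For any six vectors u1,…,u6 in R^3, setting v_{ijk} = |det(u_i,u_j,u_k)|·|det(u_l,u_m,u_n)| where {l,m,n} is the complement of {i,j,k} in {1,…,6}, one has v_{126} ≤ v_{123} + v_{124} + v_{125}. -/
/-- The determinant of the 3×3 matrix with columns `u`, `v`, `w`. -/
noncomputable def det3 (u v w : Fin 3 → ℝ) : ℝ :=
  Matrix.det (Matrix.of fun i j => ![u, v, w] j i)

/-- For six vectors in `ℝ³`, with `v_I = |det(u_I)| * |det(u_{I^c})|`,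
one has `v₁₂₆ ≤ v₁₂₃ + v₁₂₄ + v₁₂₅`. -/
theorem abs_grassmann_plucker_ineq_r3 (u1 u2 u3 u4 u5 u6 : Fin 3 → ℝ) :
    |det3 u1 u2 u6| * |det3 u3 u4 u5| ≤
      |det3 u1 u2 u3| * |det3 u4 u5 u6| + |det3 u1 u2 u4| * |det3 u3 u5 u6| +
        |det3 u1 u2 u5| * |det3 u3 u4 u6| := by
  have key : det3 u1 u2 u6 * det3 u3 u4 u5 =
      det3 u1 u2 u3 * det3 u4 u5 u6 - det3 u1 u2 u4 * det3 u3 u5 u6 +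
        det3 u1 u2 u5 * det3 u3 u4 u6 := by
    simp only [det3, Matrix.det_fin_three, Matrix.of_apply]
    simp [Matrix.cons_val_zero, Matrix.cons_val_one, Matrix.head_cons]
    ring
  calc |det3 u1 u2 u6| * |det3 u3 u4 u5|
      = |det3 u1 u2 u6 * det3 u3 u4 u5| := (abs_mul _ _).symm
    _ = |det3 u1 u2 u3 * det3 u4 u5 u6 - det3 u1 u2 u4 * det3 u3 u5 u6 +
          det3 u1 u2 u5 * det3 u3 u4 u6| := by rw [key]
    _ ≤ |det3 u1 u2 u3 * det3 u4 u5 u6 - det3 u1 u2 u4 * det3 u3 u5 u6| +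
          |det3 u1 u2 u5 * det3 u3 u4 u6| := abs_add_le _ _
    _ ≤ (|det3 u1 u2 u3 * det3 u4 u5 u6| + |det3 u1 u2 u4 * det3 u3 u5 u6|) +
          |det3 u1 u2 u5 * det3 u3 u4 u6| := by gcongr; exact abs_sub _ _
    _ = _ := by simp [abs_mul]
end

section
/- For any six vectors u1,…,u6 in R^3, with v_I = |det(u_I)|·|det(u_{I^c})| for 3-element subsets I of {1,…,6}, one has v_{123} + v_{124} + v_{125} ≤ v_{126} + v_{136} + v_{146} + v_{156} + v_{236} + v_{246} + v_{256}. -/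
lemma det3_eq (u v w : Fin 3 → ℝ) :
    det3 u v w = u 0 * v 1 * w 2 - u 0 * v 2 * w 1 - u 1 * v 0 * w 2
      + u 1 * v 2 * w 0 + u 2 * v 0 * w 1 - u 2 * v 1 * w 0 := by
  simp [det3, Matrix.det_fin_three]
  ring

lemma key_ineq (A B C q1 q2 q3 q4 q5 q6 q7 : ℝ)
    (h1 : -A + B - C + q1 = 0)
    (h2 : A + q7 - q6 + q2 = 0)
    (h3 : A - B + C + q7 - q6 + q5 = 0)
    (h4 : A + C - q6 + q3 = 0)
    (h5 : -A + B - q7 + q4 = 0) :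
    |A| + |B| + |C| ≤ |q1| + |q2| + |q3| + |q4| + |q5| + |q6| + |q7| := by
  have b1 := le_abs_self q1; have b1' := neg_abs_le q1
  have b2 := le_abs_self q2; have b2' := neg_abs_le q2
  have b3 := le_abs_self q3; have b3' := neg_abs_le q3
  have b4 := le_abs_self q4; have b4' := neg_abs_le q4
  have b5 := le_abs_self q5; have b5' := neg_abs_le q5
  have b6 := le_abs_self q6; have b6' := neg_abs_le q6
  have b7 := le_abs_self q7; have b7' := neg_abs_le q7
  rcases abs_cases A with ⟨hA, _⟩ | ⟨hA, _⟩ <;>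
    rcases abs_cases B with ⟨hB, _⟩ | ⟨hB, _⟩ <;>
      rcases abs_cases C with ⟨hC, _⟩ | ⟨hC, _⟩ <;>
        linarith

/-- For six vectors in `ℝ³`, with `v_I = |det(u_I)| * |det(u_{I^c})|`, one has
`v₁₂₃ + v₁₂₄ + v₁₂₅ ≤ v₁₂₆ + v₁₃₆ + v₁₄₆ + v₁₅₆ + v₂₃₆ + v₂₄₆ + v₂₅₆`. -/
theorem abs_grassmann_second_ineq_r3 (u1 u2 u3 u4 u5 u6 : Fin 3 → ℝ) :
    |det3 u1 u2 u3| * |det3 u4 u5 u6| + |det3 u1 u2 u4| * |det3 u3 u5 u6| +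
        |det3 u1 u2 u5| * |det3 u3 u4 u6| ≤
      |det3 u1 u2 u6| * |det3 u3 u4 u5| + |det3 u1 u3 u6| * |det3 u2 u4 u5| +
        |det3 u1 u4 u6| * |det3 u2 u3 u5| + |det3 u1 u5 u6| * |det3 u2 u3 u4| +
        |det3 u2 u3 u6| * |det3 u1 u4 u5| + |det3 u2 u4 u6| * |det3 u1 u3 u5| +
        |det3 u2 u5 u6| * |det3 u1 u3 u4| := by
  simp only [← abs_mul]
  exact key_ineq
    (det3 u1 u2 u3 * det3 u4 u5 u6) (det3 u1 u2 u4 * det3 u3 u5 u6)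
    (det3 u1 u2 u5 * det3 u3 u4 u6)
    (det3 u1 u2 u6 * det3 u3 u4 u5) (det3 u1 u3 u6 * det3 u2 u4 u5)
    (det3 u1 u4 u6 * det3 u2 u3 u5) (det3 u1 u5 u6 * det3 u2 u3 u4)
    (det3 u2 u3 u6 * det3 u1 u4 u5) (det3 u2 u4 u6 * det3 u1 u3 u5)
    (det3 u2 u5 u6 * det3 u1 u3 u4)
    (by simp only [det3_eq]; ring) (by simp only [det3_eq]; ring)
    (by simp only [det3_eq]; ring) (by simp only [det3_eq]; ring)
    (by simp only [det3_eq]; ring)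
end

section
/- Let n ≥ 4 be even. Any subset D of R^{E_n} (E_n the edges of the complete graph on n vertices) that is invariant under the additive action λ·y = (λ_i + λ_j + y_{{i,j}}) of R^n is fiber-invariant for the linear map f: R^{E_n} → R^{M_n}, f(y)_M = Σ_{e∈M} y_e, where M_n is the set of perfect matchings; here one uses that the kernel of the induced map f̄: R^{E_n} → R^{M_n}/⟨1⟩ equals the image of g(λ) = (λ_i+λ_j). -/
/-- A perfect matching on `n` vertices: a finite set of non-diagonal edges of the
complete graph such that every vertex belongs to exactly one edge. -/
def IsPerfectMatching (n : ℕ) (M : Finset {e : Sym2 (Fin n) // ¬ e.IsDiag}) : Prop :=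
  ∀ v : Fin n, ∃! e : {e : Sym2 (Fin n) // ¬ e.IsDiag}, e ∈ M ∧ v ∈ e.val

/-- The map `g : ℝⁿ → ℝ^{Eₙ}`, `g(λ)_{{i,j}} = λᵢ + λⱼ`. -/
noncomputable def gMap (n : ℕ) (lam : Fin n → ℝ) (e : {e : Sym2 (Fin n) // ¬ e.IsDiag}) : ℝ :=
  Sym2.lift ⟨fun i j => lam i + lam j, fun _ _ => add_comm _ _⟩ e.val

/-- The map `f : ℝ^{Eₙ} → ℝ^{Mₙ}`, `f(y)_M = ∑_{e ∈ M} y_e`, with `Mₙ` the set of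
perfect matchings. -/
noncomputable def fMap (n : ℕ) (y : {e : Sym2 (Fin n) // ¬ e.IsDiag} → ℝ)
    (M : {M : Finset {e : Sym2 (Fin n) // ¬ e.IsDiag} // IsPerfectMatching n M}) : ℝ :=
  ∑ e ∈ M.val, y e

namespace AuxPM

variable {n : ℕ}

def ed (i j : Fin n) (h : i ≠ j) : {e : Sym2 (Fin n) // ¬ e.IsDiag} :=
  ⟨s(i, j), by simpa using h⟩

lemma ed_symm (i j : Fin n) (h : i ≠ j) : ed i j h = ed j i h.symm :=
  Subtype.ext (Sym2.eq_swap)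

def edgeOf (π : Fin n → Fin n) (hne : ∀ v, π v ≠ v) (v : Fin n) :
    {e : Sym2 (Fin n) // ¬ e.IsDiag} := ed v (π v) (Ne.symm (hne v))

def matchOf (π : Fin n → Fin n) (hne : ∀ v, π v ≠ v) :
    Finset {e : Sym2 (Fin n) // ¬ e.IsDiag} :=
  Finset.image (edgeOf π hne) Finset.univ

lemma exists_fpf_involution (α : Type*) [Fintype α] [DecidableEq α]
    (h : Even (Fintype.card α)) :
    ∃ π : α → α, (∀ x, π x ≠ x) ∧ (∀ x, π (π x) = x) := by
  obtain ⟨k, hk⟩ := h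
  have hcard : Fintype.card α = k * 2 := by omega
  let E : α ≃ Fin k × Fin 2 :=
    ((Fintype.equivFin α).trans (finCongr hcard)).trans finProdFinEquiv.symm
  have hb1 : ∀ b : Fin 2, b + 1 ≠ b := by decide
  have hb2 : ∀ b : Fin 2, b + 1 + 1 = b := by decide
  refine ⟨fun x => E.symm ((E x).1, (E x).2 + 1), ?_, ?_⟩
  · intro x hx
    have h1 : ((E x).1, (E x).2 + 1) = E x := by
      have := congrArg E hx
      simpa using this
    have := congrArg Prod.snd h1
    exact hb1 _ this
  · intro x
    simp only [Equiv.apply_symm_apply, hb2]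
    exact E.symm_apply_apply x

lemma matchOf_isPM (π : Fin n → Fin n) (hne : ∀ v, π v ≠ v) (hinv : ∀ v, π (π v) = v) :
    IsPerfectMatching n (matchOf π hne) := by
  intro v
  refine ⟨edgeOf π hne v, ⟨Finset.mem_image_of_mem _ (Finset.mem_univ v), ?_⟩, ?_⟩
  · simp [edgeOf, ed]
  · rintro e ⟨hmem, hv⟩
    simp only [matchOf, Finset.mem_image, Finset.mem_univ, true_and] at hmem
    obtain ⟨a, rfl⟩ := hmem
    simp only [edgeOf, ed, Sym2.mem_iff] at hv
    rcases hv with rfl | rfl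
    · rfl
    · apply Subtype.ext
      show s(a, π a) = s(π a, π (π a))
      rw [hinv a, Sym2.eq_swap]

lemma sum_edgeOf (π : Fin n → Fin n) (hne : ∀ v, π v ≠ v) (hinv : ∀ v, π (π v) = v)
    (W : {e : Sym2 (Fin n) // ¬ e.IsDiag} → ℝ) :
    ∑ v, W (edgeOf π hne v) = 2 * ∑ e ∈ matchOf π hne, W e := by
  rw [Finset.sum_comp W (edgeOf π hne), Finset.mul_sum]
  refine Finset.sum_congr rfl ?_
  intro e he
  simp only [matchOf, Finset.mem_image, Finset.mem_univ, true_and] at he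
  obtain ⟨a, rfl⟩ := he
  have hfil : Finset.univ.filter (fun v => edgeOf π hne v = edgeOf π hne a) = {a, π a} := by
    ext v
    simp only [Finset.mem_filter, Finset.mem_univ, true_and, Finset.mem_insert,
      Finset.mem_singleton]
    constructor
    · intro h
      have h' : s(v, π v) = s(a, π a) := congrArg Subtype.val h
      rw [Sym2.eq_iff] at h'
      rcases h' with ⟨rfl, _⟩ | ⟨rfl, _⟩
      · exact Or.inl rfl
      · exact Or.inr rfl
    · rintro (rfl | rfl)
      · rfl
      · apply Subtype.ext
        show s(π a, π (π a)) = s(a, π a)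
        rw [hinv, Sym2.eq_swap]
  rw [hfil, Finset.card_pair (Ne.symm (hne a))]
  ring

def sw4 (i j k l : Fin n) : Fin n → Fin n := fun v =>
  if v = i then j else if v = j then i else if v = k then l else k

def sw4' (i j k l : Fin n) : Fin n → Fin n := fun v =>
  if v = i then k else if v = k then i else if v = j then l else j

def glue (T : Finset (Fin n)) (π₀ : ↥(Tᶜ) → ↥(Tᶜ)) (σ : Fin n → Fin n) : Fin n → Fin n :=
  fun v => if h : v ∈ Tᶜ then (π₀ ⟨v, h⟩ : Fin n) else σ v

lemma glue_pos (T : Finset (Fin n)) (π₀ : ↥(Tᶜ) → ↥(Tᶜ)) (σ : Fin n → Fin n)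
    {v : Fin n} (h : v ∈ Tᶜ) : glue T π₀ σ v = (π₀ ⟨v, h⟩ : Fin n) := dif_pos h

lemma glue_neg (T : Finset (Fin n)) (π₀ : ↥(Tᶜ) → ↥(Tᶜ)) (σ : Fin n → Fin n)
    {v : Fin n} (h : v ∉ Tᶜ) : glue T π₀ σ v = σ v := dif_neg h

lemma glue_props (T : Finset (Fin n)) (π₀ : ↥(Tᶜ) → ↥(Tᶜ))
    (hπ₀ne : ∀ x, π₀ x ≠ x) (hπ₀inv : ∀ x, π₀ (π₀ x) = x) (σ : Fin n → Fin n)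
    (hσ : ∀ v ∈ T, σ v ∈ T ∧ σ v ≠ v ∧ σ (σ v) = v) :
    (∀ v, glue T π₀ σ v ≠ v) ∧ (∀ v, glue T π₀ σ (glue T π₀ σ v) = v) := by
  constructor
  · intro v
    by_cases h : v ∈ Tᶜ
    · rw [glue_pos T π₀ σ h]
      intro heq
      exact hπ₀ne ⟨v, h⟩ (Subtype.ext heq)
    · rw [glue_neg T π₀ σ h]
      exact (hσ v (by simpa using h)).2.1
  · intro v
    by_cases h : v ∈ Tᶜ
    · have h2 : (π₀ ⟨v, h⟩ : Fin n) ∈ Tᶜ := (π₀ ⟨v, h⟩).2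
      rw [glue_pos T π₀ σ h, glue_pos T π₀ σ h2]
      exact congrArg Subtype.val (hπ₀inv ⟨v, h⟩)
    · have hvT : v ∈ T := by simpa using h
      have h2 : σ v ∉ Tᶜ := by simpa using (hσ v hvT).1
      rw [glue_neg T π₀ σ h, glue_neg T π₀ σ h2]
      exact (hσ v hvT).2.2

lemma exchange (n : ℕ) (hn : 4 ≤ n) (heven : Even n)
    (W : {e : Sym2 (Fin n) // ¬ e.IsDiag} → ℝ)
    (hW : ∀ M : {M : Finset {e : Sym2 (Fin n) // ¬ e.IsDiag} // IsPerfectMatching n M},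
      ∑ e ∈ M.val, W e = 0)
    (i j k l : Fin n) (hij : i ≠ j) (hik : i ≠ k) (hil : i ≠ l)
    (hjk : j ≠ k) (hjl : j ≠ l) (hkl : k ≠ l) :
    W (ed i j hij) + W (ed k l hkl) = W (ed i k hik) + W (ed j l hjl) := by
  classical
  set T : Finset (Fin n) := {i, j, k, l} with hT
  have hmemT : ∀ v, v ∈ T ↔ v = i ∨ v = j ∨ v = k ∨ v = l := by
    intro v; simp [hT]
  have hcardT : T.card = 4 := by
    rw [hT, Finset.card_insert_of_notMem (by simp [hij, hik, hil]),
      Finset.card_insert_of_notMem (by simp [hjk, hjl]),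
      Finset.card_insert_of_notMem (by simp [hkl]), Finset.card_singleton]
  have hevenC : Even (Fintype.card ↥(Tᶜ : Finset (Fin n))) := by
    have : Fintype.card ↥(Tᶜ : Finset (Fin n)) = n - 4 := by
      simp [Finset.card_compl, hcardT]
    rw [this]
    obtain ⟨m, hm⟩ := heven
    exact ⟨m - 2, by omega⟩
  obtain ⟨π₀, hπ₀ne, hπ₀inv⟩ := exists_fpf_involution _ hevenC
  -- membership facts
  have hiT : i ∈ T := (hmemT i).2 (Or.inl rfl)
  have hjT : j ∈ T := (hmemT j).2 (Or.inr (Or.inl rfl))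
  have hkT : k ∈ T := (hmemT k).2 (Or.inr (Or.inr (Or.inl rfl)))
  have hlT : l ∈ T := (hmemT l).2 (Or.inr (Or.inr (Or.inr rfl)))
  -- sw4 facts
  have hs1 : ∀ v ∈ T, sw4 i j k l v ∈ T ∧ sw4 i j k l v ≠ v ∧ sw4 i j k l (sw4 i j k l v) = v := by
    intro v hv
    have hsi : sw4 i j k l i = j := by simp [sw4]
    have hsj : sw4 i j k l j = i := by simp [sw4, hij.symm]
    have hsk : sw4 i j k l k = l := by simp [sw4, hik.symm, hjk.symm]
    have hsl : sw4 i j k l l = k := by simp [sw4, hil.symm, hjl.symm, hkl.symm]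
    rcases (hmemT v).1 hv with rfl | rfl | rfl | rfl
    · exact ⟨by rw [hsi]; exact hjT, by rw [hsi]; exact hij.symm, by rw [hsi, hsj]⟩
    · exact ⟨by rw [hsj]; exact hiT, by rw [hsj]; exact hij, by rw [hsj, hsi]⟩
    · exact ⟨by rw [hsk]; exact hlT, by rw [hsk]; exact hkl.symm, by rw [hsk, hsl]⟩
    · exact ⟨by rw [hsl]; exact hkT, by rw [hsl]; exact hkl, by rw [hsl, hsk]⟩
  have hs2 : ∀ v ∈ T, sw4' i j k l v ∈ T ∧ sw4' i j k l v ≠ v ∧ sw4' i j k l (sw4' i j k l v) = v := by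
    intro v hv
    have hsi : sw4' i j k l i = k := by simp [sw4']
    have hsk : sw4' i j k l k = i := by simp [sw4', hik.symm]
    have hsj : sw4' i j k l j = l := by simp [sw4', hij.symm, hjk]
    have hsl : sw4' i j k l l = j := by simp [sw4', hil.symm, hkl.symm, hjl.symm]
    rcases (hmemT v).1 hv with rfl | rfl | rfl | rfl
    · exact ⟨by rw [hsi]; exact hkT, by rw [hsi]; exact hik.symm, by rw [hsi, hsk]⟩
    · exact ⟨by rw [hsj]; exact hlT, by rw [hsj]; exact hjl.symm, by rw [hsj, hsl]⟩
    · exact ⟨by rw [hsk]; exact hiT, by rw [hsk]; exact hik, by rw [hsk, hsi]⟩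
    · exact ⟨by rw [hsl]; exact hjT, by rw [hsl]; exact hjl, by rw [hsl, hsj]⟩
  obtain ⟨hne1, hinv1⟩ := glue_props T π₀ hπ₀ne hπ₀inv (sw4 i j k l) hs1
  obtain ⟨hne2, hinv2⟩ := glue_props T π₀ hπ₀ne hπ₀inv (sw4' i j k l) hs2
  set π1 := glue T π₀ (sw4 i j k l) with hπ1
  set π2 := glue T π₀ (sw4' i j k l) with hπ2
  have h1sum : ∑ v, W (edgeOf π1 hne1 v) = 0 := by
    rw [sum_edgeOf π1 hne1 hinv1 W, hW ⟨matchOf π1 hne1, matchOf_isPM π1 hne1 hinv1⟩]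
    ring
  have h2sum : ∑ v, W (edgeOf π2 hne2 v) = 0 := by
    rw [sum_edgeOf π2 hne2 hinv2 W, hW ⟨matchOf π2 hne2, matchOf_isPM π2 hne2 hinv2⟩]
    ring
  have hiC : i ∉ (Tᶜ : Finset (Fin n)) := by simpa using hiT
  have hjC : j ∉ (Tᶜ : Finset (Fin n)) := by simpa using hjT
  have hkC : k ∉ (Tᶜ : Finset (Fin n)) := by simpa using hkT
  have hlC : l ∉ (Tᶜ : Finset (Fin n)) := by simpa using hlT
  have hπ1i : π1 i = j := by rw [hπ1, glue_neg T π₀ _ hiC]; simp [sw4]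
  have hπ1j : π1 j = i := by rw [hπ1, glue_neg T π₀ _ hjC]; simp [sw4, hij.symm]
  have hπ1k : π1 k = l := by rw [hπ1, glue_neg T π₀ _ hkC]; simp [sw4, hik.symm, hjk.symm]
  have hπ1l : π1 l = k := by rw [hπ1, glue_neg T π₀ _ hlC]; simp [sw4, hil.symm, hjl.symm, hkl.symm]
  have hπ2i : π2 i = k := by rw [hπ2, glue_neg T π₀ _ hiC]; simp [sw4']
  have hπ2j : π2 j = l := by rw [hπ2, glue_neg T π₀ _ hjC]; simp [sw4', hij.symm, hjk]
  have hπ2k : π2 k = i := by rw [hπ2, glue_neg T π₀ _ hkC]; simp [sw4', hik.symm]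
  have hπ2l : π2 l = j := by rw [hπ2, glue_neg T π₀ _ hlC]; simp [sw4', hil.symm, hkl.symm, hjl.symm]
  have hdiffT : ∑ v ∈ T, (W (edgeOf π1 hne1 v) - W (edgeOf π2 hne2 v)) = 0 := by
    have htot : ∑ v : Fin n, (W (edgeOf π1 hne1 v) - W (edgeOf π2 hne2 v)) = 0 := by
      rw [Finset.sum_sub_distrib, h1sum, h2sum]; ring
    rw [← htot]
    apply Finset.sum_subset (Finset.subset_univ T)
    intro x _ hx
    have hxC : x ∈ (Tᶜ : Finset (Fin n)) := Finset.mem_compl.2 hx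
    have hxx : π1 x = π2 x := by
      rw [hπ1, hπ2, glue_pos T π₀ _ hxC, glue_pos T π₀ _ hxC]
    have : edgeOf π1 hne1 x = edgeOf π2 hne2 x := by
      apply Subtype.ext
      show s(x, π1 x) = s(x, π2 x)
      rw [hxx]
    rw [this]; ring
  -- expand the sum over T
  have hexp : ∑ v ∈ T, (W (edgeOf π1 hne1 v) - W (edgeOf π2 hne2 v)) =
      (W (edgeOf π1 hne1 i) - W (edgeOf π2 hne2 i)) +
      (W (edgeOf π1 hne1 j) - W (edgeOf π2 hne2 j)) +
      (W (edgeOf π1 hne1 k) - W (edgeOf π2 hne2 k)) +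
      (W (edgeOf π1 hne1 l) - W (edgeOf π2 hne2 l)) := by
    rw [hT]
    rw [Finset.sum_insert (by simp [hij, hik, hil]),
      Finset.sum_insert (by simp [hjk, hjl]),
      Finset.sum_insert (by simp [hkl]), Finset.sum_singleton]
    ring
  have e1i : edgeOf π1 hne1 i = ed i j hij := Subtype.ext (by show s(i, π1 i) = s(i, j); rw [hπ1i])
  have e1j : edgeOf π1 hne1 j = ed i j hij := Subtype.ext (by show s(j, π1 j) = s(i, j); rw [hπ1j, Sym2.eq_swap])
  have e1k : edgeOf π1 hne1 k = ed k l hkl := Subtype.ext (by show s(k, π1 k) = s(k, l); rw [hπ1k])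
  have e1l : edgeOf π1 hne1 l = ed k l hkl := Subtype.ext (by show s(l, π1 l) = s(k, l); rw [hπ1l, Sym2.eq_swap])
  have e2i : edgeOf π2 hne2 i = ed i k hik := Subtype.ext (by show s(i, π2 i) = s(i, k); rw [hπ2i])
  have e2j : edgeOf π2 hne2 j = ed j l hjl := Subtype.ext (by show s(j, π2 j) = s(j, l); rw [hπ2j])
  have e2k : edgeOf π2 hne2 k = ed i k hik := Subtype.ext (by show s(k, π2 k) = s(i, k); rw [hπ2k, Sym2.eq_swap])
  have e2l : edgeOf π2 hne2 l = ed j l hjl := Subtype.ext (by show s(l, π2 l) = s(j, l); rw [hπ2l, Sym2.eq_swap])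
  rw [hexp, e1i, e1j, e1k, e1l, e2i, e2j, e2k, e2l] at hdiffT
  linarith

end AuxPM

/-- Every subset of `ℝ^{Eₙ}` invariant under the additive action
`(λ · y)_{{i,j}} = λᵢ + λⱼ + y_{{i,j}}` of `ℝⁿ` is fiber-invariant for `f`. -/


theorem invariant_subset_fiberInvariant (n : ℕ) (hn : 4 ≤ n) (heven : Even n)
    (D : Set ({e : Sym2 (Fin n) // ¬ e.IsDiag} → ℝ))
    (hD : ∀ (lam : Fin n → ℝ), ∀ y ∈ D, (fun e => gMap n lam e + y e) ∈ D) :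
    ∀ y ∈ D, ∀ z, fMap n z = fMap n y → z ∈ D := by
  classical
  intro y hy z hz
  set W : {e : Sym2 (Fin n) // ¬ e.IsDiag} → ℝ := fun e => z e - y e with hWdef
  have hW0 : ∀ M : {M : Finset {e : Sym2 (Fin n) // ¬ e.IsDiag} // IsPerfectMatching n M},
      ∑ e ∈ M.val, W e = 0 := by
    intro M
    have h1 : fMap n z M = fMap n y M := congrFun hz M
    simp only [fMap] at h1
    simp [hWdef, Finset.sum_sub_distrib, h1]
  set WW : Fin n → Fin n → ℝ :=
    fun p q => if h : p = q then 0 else W (AuxPM.ed p q h) with hWWdef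
  have WW_def : ∀ (p q : Fin n) (h : p ≠ q), WW p q = W (AuxPM.ed p q h) := by
    intro p q h
    simp only [hWWdef]
    rw [dif_neg h]
  have WW_symm : ∀ p q : Fin n, WW p q = WW q p := by
    intro p q
    by_cases h : p = q
    · subst h; rfl
    · rw [WW_def p q h, WW_def q p (Ne.symm h), AuxPM.ed_symm]
  have key : ∀ (p q r s : Fin n), p ≠ q → p ≠ r → p ≠ s → q ≠ r → q ≠ s → r ≠ s →
      WW p q + WW r s = WW p r + WW q s := by
    intro p q r s h1 h2 h3 h4 h5 h6
    rw [WW_def p q h1, WW_def r s h6, WW_def p r h2, WW_def q s h5]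
    exact AuxPM.exchange n hn heven W hW0 p q r s h1 h2 h3 h4 h5 h6
  let a : Fin n := ⟨0, by omega⟩
  let b : Fin n := ⟨1, by omega⟩
  let c : Fin n := ⟨2, by omega⟩
  have hab : a ≠ b := by simp [a, b, Fin.ext_iff]
  have hac : a ≠ c := by simp [a, c, Fin.ext_iff]
  have hbc : b ≠ c := by simp [b, c, Fin.ext_iff]
  set lam : Fin n → ℝ := fun v =>
    if v = a then (WW a b + WW a c - WW b c) / 2
    else if v = b then (WW a b + WW b c - WW a c) / 2
    else (WW v a + WW v b - WW a b) / 2 with hlam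
  have hlamA : lam a = (WW a b + WW a c - WW b c) / 2 := by
    simp [hlam]
  have hlamB : lam b = (WW a b + WW b c - WW a c) / 2 := by
    simp [hlam, hab.symm]
  have hlamO : ∀ v : Fin n, v ≠ a → v ≠ b → lam v = (WW v a + WW v b - WW a b) / 2 := by
    intro v hva hvb
    simp [hlam, hva, hvb]
  have hA : ∀ q : Fin n, q ≠ a → q ≠ b → lam a + lam q = WW a q := by
    intro q hqa hqb
    rw [hlamA, hlamO q hqa hqb]
    by_cases hqc : q = c
    · subst hqc
      rw [WW_symm c a, WW_symm c b]
      ring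
    · have hx := key a c q b hac (Ne.symm hqa) hab (fun h => hqc h.symm) (Ne.symm hbc) hqb
      have h1 := WW_symm q a
      have h2 := WW_symm c b
      linarith
  have hB : ∀ q : Fin n, q ≠ a → q ≠ b → lam b + lam q = WW b q := by
    intro q hqa hqb
    rw [hlamB, hlamO q hqa hqb]
    by_cases hqc : q = c
    · subst hqc
      rw [WW_symm c a, WW_symm c b]
      ring
    · have hx := key b c q a hbc (Ne.symm hqb) (Ne.symm hab) (fun h => hqc h.symm) (Ne.symm hac) hqa
      have h1 := WW_symm q b
      have h2 := WW_symm c a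
      linarith
  have hmain : ∀ (p q : Fin n), p ≠ q → lam p + lam q = WW p q := by
    intro p q hpq
    by_cases hpa : p = a
    · subst hpa
      by_cases hqb : q = b
      · subst hqb; rw [hlamA, hlamB]; ring
      · exact hA q (Ne.symm hpq) hqb
    · by_cases hpb : p = b
      · subst hpb
        by_cases hqa : q = a
        · subst hqa
          rw [hlamA, hlamB, WW_symm b a]
          ring
        · exact hB q hqa (Ne.symm hpq)
      · by_cases hqa : q = a
        · subst hqa
          rw [add_comm, hA p hpa hpb, WW_symm a p]
        · by_cases hqb : q = b
          · subst hqb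
            rw [add_comm, hB p hpa hpb, WW_symm b p]
          · -- both p, q outside {a,b}
            rw [hlamO p hpa hpb, hlamO q hqa hqb]
            have hx1 := key p a q b hpa hpq hpb (Ne.symm hqa) hab hqb
            have hx2 := key p b q a hpb hpq hpa (Ne.symm hqb) (Ne.symm hab) hqa
            have h1 := WW_symm b a
            linarith
  have hz2 : z = fun e => gMap n lam e + y e := by
    funext e
    obtain ⟨e, he⟩ := e
    revert he
    induction e using Sym2.inductionOn with
    | hf p q =>
      intro he
      have hpq : p ≠ q := by simpa using he
      have hg : gMap n lam ⟨s(p, q), he⟩ = lam p + lam q := by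
        simp [gMap]
      rw [hg, hmain p q hpq, WW_def p q hpq]
      have : AuxPM.ed p q hpq = ⟨s(p, q), he⟩ := rfl
      rw [this]
      simp [hWdef]
  rw [hz2]
  exact hD lam y hy
end
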